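/- Let (W,S) be a Coxeter system and I ⊆ S. The right quotient W^I = {w : ℓ(ws) > ℓ(w) for all s ∈ I} satisfies the chain property: if u < w both lie in W^I, then there is a chain u = v₀ < v₁ < ⋯ < v_k = w in W^I with ℓ(v_{i+1}) = ℓ(v_i) + 1 for all i. -/

import Mathlib

/-!
Strong exchange comes from a parity cocycle: `W` acts on `W × ZMod 2` by letting `s i` send
`(t, e)` to `(s i * t * s i, e + [t = s i])`. The Coxeter relations hold because the inversion
sequence of the word `(i j) ^ M i j` lists every reflection an even number of times. The second
coordinate of the image of `(t, 0)` under `w` counts modulo 2 the occurrences of `t` in the right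
inversion sequence of any word for `w`, and it is 1 exactly when `ℓ (w * t) < ℓ w`.

Strong exchange yields the lifting property: for a simple reflection `s`, the shorter and the
longer of `w` and `s * w` are Bruhat-monotone functions of `w`.

The chain property follows by induction on `ℓ w`, for a left descent `s` of `w`. If `u ≤ s * w`,
a chain from `u` to `s * w` is extended by `w`. Otherwise `s * u < u`, and a chain from `s * u`
to `s * w` in `W^I` is multiplied by `s` up to its first term `y'` with `s * y' < y'`, where the
lifted chain meets the old one: `s * y = y'` for the term `y` before it. The lifted terms stay in
`W^I`: if `s * y' * s j < s * y'` for some `j ∈ I`, right lifting would give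
`s * y = s * y' * s j`, that is `y = y' * s j`, contradicting `y' ∈ W^I`.
-/

open CoxeterSystem List

variable {B W : Type*} [Group W] {M : CoxeterMatrix B}

namespace CoxeterBruhat

/-- One edge in the Bruhat graph: `v = t * u` for a reflection `t`, with `ℓ(u) < ℓ(v)`. -/
def Step (cs : CoxeterSystem M W) (u v : W) : Prop :=
  ∃ t : W, cs.IsReflection t ∧ v = t * u ∧ cs.length u < cs.length v

/-- The Bruhat order, as the reflexive-transitive closure of `Step`. -/
def BruhatLE (cs : CoxeterSystem M W) : W → W → Prop :=
  Relation.ReflTransGen (Step cs)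

/-- The standard parabolic subgroup generated by the simple reflections indexed by `I`. -/
def parabolic (cs : CoxeterSystem M W) (I : Set B) : Subgroup W :=
  Subgroup.closure (cs.simple '' I)

/-- The left descent set `D_L(w)`. -/
def leftDescents (cs : CoxeterSystem M W) (w : W) : Set B :=
  {i | cs.IsLeftDescent w i}

/-- The right descent set `D_R(w)`. -/
def rightDescents (cs : CoxeterSystem M W) (w : W) : Set B :=
  {i | cs.IsRightDescent w i}

/-- The double coset `W_I u W_J` as a set. -/
def doubleCoset (cs : CoxeterSystem M W) (I J : Set B) (u : W) : Set W :=
  {v | ∃ x ∈ parabolic cs I, ∃ y ∈ parabolic cs J, v = x * u * y}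

/-- The Bruhat coset `C_w(u) = W_{D_L(w)} u W_{D_R(w)}`. -/
def bCoset (cs : CoxeterSystem M W) (w u : W) : Set W :=
  doubleCoset cs (leftDescents cs w) (rightDescents cs w) u

/-- The lower Bruhat interval `B(w) = [e, w]`. -/
def lowerInterval (cs : CoxeterSystem M W) (w : W) : Set W :=
  {v | BruhatLE cs v w}

/-- The support `S(v)` of `v`: simple reflections below `v` in Bruhat order. -/
def support (cs : CoxeterSystem M W) (v : W) : Set B :=
  {i | BruhatLE cs (cs.simple i) v}

theorem _root_.Relation.ReflTransGen.exists_chain {α : Type*} {r : α → α → Prop} {a b : α}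
    (h : Relation.ReflTransGen r a b) :
    ∃ (k : ℕ) (c : ℕ → α), c 0 = a ∧ c k = b ∧ ∀ i < k, r (c i) (c (i + 1)) := by
  induction h with
  | refl => exact ⟨0, fun _ => a, rfl, rfl, by simp⟩
  | @tail b d _ hbd ih =>
    obtain ⟨k, c, hc0, hck, hc⟩ := ih
    refine ⟨k + 1, fun i => if i ≤ k then c i else d, by simpa using hc0, by simp,
      fun i hi => ?_⟩
    rcases Nat.lt_or_ge i k with hik | hik
    · simpa [hik.le, Nat.succ_le_of_lt hik] using hc i hik
    · obtain rfl : i = k := by omega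
      simpa [hck] using hbd

variable (cs : CoxeterSystem M W)

local prefix:100 "s " => cs.simple
local prefix:100 "π " => cs.wordProd
local prefix:100 "ℓ " => cs.length
local prefix:100 "ris " => cs.rightInvSeq
local prefix:100 "lis " => cs.leftInvSeq

theorem leftInvSeq_eq_map_conj_rightInvSeq (ω : List B) :
    lis ω = (ris ω).map (MulAut.conj (π ω)) := by
  induction ω with
  | nil => rfl
  | cons i ω ih =>
    simp only [leftInvSeq, rightInvSeq, ih, List.map_map, wordProd_cons, map_mul, List.map_cons]
    refine congrArg₂ _ ?_ rfl
    simp [mul_assoc]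

theorem wordProd_alternatingWord_odd_periodic (i j : B) (k : ℕ) :
    π alternatingWord j i (2 * (k + M i j) + 1) = π alternatingWord j i (2 * k + 1) := by
  simp only [prod_alternatingWord_eq_mul_pow, Nat.not_even_bit1, if_false,
    show ∀ n, (2 * n + 1) / 2 = n by omega, pow_add, simple_mul_simple_pow', mul_one]

theorem leftInvSeq_alternatingWord_eq_append (i j : B) :
    lis alternatingWord i j (2 * M i j) =
      ((List.range (M i j)).map fun k => π alternatingWord j i (2 * k + 1)) ++
        (List.range (M i j)).map fun k => π alternatingWord j i (2 * k + 1) := by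
  refine List.ext_getElem (by simp; omega) fun k hk _ => ?_
  rw [getElem_leftInvSeq_alternatingWord cs i j _ k (by simpa using hk), List.getElem_append]
  split_ifs with h
  · simp
  · simp only [List.length_map, List.length_range, not_lt] at h
    obtain ⟨n, rfl⟩ := Nat.exists_eq_add_of_le' h
    simp [wordProd_alternatingWord_odd_periodic]

theorem conj_eq_iff_eq_conj {G : Type*} [Group G] (g t x : G) :
    g * t * g⁻¹ = x ↔ t = g⁻¹ * x * g := by
  constructor <;> rintro rfl <;> group

theorem simple_conj_eq_simple_iff (i : B) (t : W) : s i * t * s i = s i ↔ t = s i := by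
  simpa [cs.inv_simple] using conj_eq_iff_eq_conj (s i) t (s i)

section InversionParity

variable [DecidableEq W]

noncomputable def parityPerm (i : B) : Equiv.Perm (W × ZMod 2) :=
  Function.Involutive.toPerm (fun p => (s i * p.1 * s i, p.2 + if p.1 = s i then 1 else 0))
    fun ⟨t, e⟩ => by
      refine Prod.ext (by simp [mul_assoc]) ?_
      simp only [simple_conj_eq_simple_iff, add_assoc, CharTwo.add_self_eq_zero, add_zero]

theorem parityPerm_apply (i : B) (t : W) (e : ZMod 2) :
    parityPerm cs i (t, e) = (s i * t * s i, e + if t = s i then 1 else 0) := rfl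

theorem prod_map_parityPerm_apply (ω : List B) (t : W) (e : ZMod 2) :
    (ω.map (parityPerm cs)).prod (t, e) =
      (π ω * t * (π ω)⁻¹, e + (List.count t (ris ω) : ZMod 2)) := by
  induction ω with
  | nil => simp
  | cons i ω ih =>
    simp only [List.map_cons, List.prod_cons, Equiv.Perm.mul_apply, ih, parityPerm_apply,
      rightInvSeq, List.count_cons, beq_iff_eq, wordProd_cons, conj_eq_iff_eq_conj,
      eq_comm (a := t)]
    refine Prod.ext ?_ ?_
    · simp [mul_assoc, cs.inv_simple]
    · push_cast; ring

theorem parityPerm_mul_parityPerm_pow (i j : B) (p : ℕ) :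
    (parityPerm cs i * parityPerm cs j) ^ p =
      ((alternatingWord i j (2 * p)).map (parityPerm cs)).prod := by
  induction p with
  | zero => simp [alternatingWord]
  | succ p ih =>
    rw [pow_succ', ih, show 2 * (p + 1) = 2 * p + 1 + 1 by ring, alternatingWord_succ',
      alternatingWord_succ']
    simp [mul_assoc]

-- The word has product 1, so its right inversion sequence equals its left one, which lists every
-- reflection of the dihedral subgroup `⟨s i, s j⟩` twice: all counts are even.
theorem isLiftable_parityPerm : M.IsLiftable (parityPerm cs) := by
  intro i j
  have hπ : π alternatingWord i j (2 * M i j) = 1 := by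
    simp [prod_alternatingWord_eq_mul_pow, simple_mul_simple_pow]
  have hris : ris alternatingWord i j (2 * M i j) = lis alternatingWord i j (2 * M i j) := by
    simp [leftInvSeq_eq_map_conj_rightInvSeq, hπ]
  ext ⟨t, e⟩ : 1
  rw [parityPerm_mul_parityPerm_pow, prod_map_parityPerm_apply, hπ, hris,
    leftInvSeq_alternatingWord_eq_append, List.count_append]
  simp [CharTwo.add_self_eq_zero]

noncomputable def parityRep : W →* Equiv.Perm (W × ZMod 2) :=
  cs.lift ⟨parityPerm cs, isLiftable_parityPerm cs⟩

theorem parityRep_wordProd (ω : List B) :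
    parityRep cs (π ω) = (ω.map (parityPerm cs)).prod := by
  rw [wordProd, map_list_prod, List.map_map]
  exact congrArg _ (List.map_congr_left fun i _ => cs.lift_apply_simple _ i)

noncomputable def inversionParity (w t : W) : ZMod 2 := (parityRep cs w (t, 0)).2

theorem inversionParity_wordProd (ω : List B) (t : W) :
    inversionParity cs (π ω) t = List.count t (ris ω) := by
  simp [inversionParity, parityRep_wordProd, prod_map_parityPerm_apply]

theorem parityRep_apply (w t : W) (e : ZMod 2) :
    parityRep cs w (t, e) = (w * t * w⁻¹, e + inversionParity cs w t) := by
  obtain ⟨ω, rfl⟩ := cs.wordProd_surjective w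
  rw [parityRep_wordProd, prod_map_parityPerm_apply, inversionParity_wordProd]

theorem inversionParity_mul (w v t : W) :
    inversionParity cs (w * v) t =
      inversionParity cs v t + inversionParity cs w (v * t * v⁻¹) := by
  have h := congrArg Prod.snd (parityRep_apply cs (w * v) t 0)
  rw [map_mul, Equiv.Perm.mul_apply, parityRep_apply cs v, parityRep_apply cs w] at h
  simpa using h.symm

theorem inversionParity_one (t : W) : inversionParity cs 1 t = 0 := by
  simp [inversionParity]

theorem inversionParity_self {t : W} (ht : cs.IsReflection t) : inversionParity cs t t = 1 := by
  obtain ⟨w, i, rfl⟩ := ht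
  have h₁ := inversionParity_mul cs (w * s i) w⁻¹ (w * s i * w⁻¹)
  have h₂ := inversionParity_mul cs w (s i) (s i)
  have h₃ := inversionParity_mul cs w⁻¹ w (s i)
  have h₄ := inversionParity_wordProd cs [i] (s i)
  simp only [inv_inv, inv_mul_cancel, inversionParity_one, wordProd_singleton,
    rightInvSeq_singleton, List.count_singleton_self, Nat.cast_one,
    show w⁻¹ * (w * s i * w⁻¹) * w = s i by group, show s i * s i * (s i)⁻¹ = s i by group]
    at h₁ h₂ h₃ h₄
  linear_combination h₁ + h₂ - h₃ + h₄

theorem inversionParity_mul_self (w : W) {t : W} (ht : cs.IsReflection t) :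
    inversionParity cs (w * t) t = inversionParity cs w t + 1 := by
  rw [inversionParity_mul, inversionParity_self cs ht, ht.mul_self, one_mul, ht.inv, add_comm]

theorem mem_rightInvSeq_of_inversionParity_eq_one {ω : List B} {t : W}
    (h : inversionParity cs (π ω) t = 1) : t ∈ ris ω := by
  by_contra hmem
  simp [inversionParity_wordProd, List.count_eq_zero.mpr hmem] at h

theorem length_mul_lt_of_inversionParity_eq_one {w t : W} (h : inversionParity cs w t = 1) :
    ℓ (w * t) < ℓ w := by
  obtain ⟨ω, hω, rfl⟩ := cs.exists_isReduced w
  exact (cs.isRightInversion_of_mem_rightInvSeq hω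
    (mem_rightInvSeq_of_inversionParity_eq_one cs h)).2

theorem inversionParity_eq_one_of_length_mul_lt {w t : W} (ht : cs.IsReflection t)
    (h : ℓ (w * t) < ℓ w) : inversionParity cs w t = 1 := by
  rcases (by decide : ∀ x : ZMod 2, x = 0 ∨ x = 1) (inversionParity cs w t) with h₀ | h₁
  · have := length_mul_lt_of_inversionParity_eq_one cs (by
      rw [inversionParity_mul_self cs w ht, h₀, zero_add])
    rw [mul_assoc, ht.mul_self, mul_one] at this
    omega
  · exact h₁

end InversionParity

theorem exists_reflection_mul_eq_wordProd_eraseIdx (ω : List B) {t : W}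
    (ht : cs.IsReflection t) (hlt : ℓ (t * π ω) < ℓ (π ω)) :
    ∃ j < ω.length, t * π ω = π (ω.eraseIdx j) := by
  classical
  have ht' : cs.IsReflection ((π ω)⁻¹ * t * π ω) := by simpa using ht.conj (π ω)⁻¹
  have hπt' : π ω * ((π ω)⁻¹ * t * π ω) = t * π ω := by group
  have hmem : (π ω)⁻¹ * t * π ω ∈ ris ω := mem_rightInvSeq_of_inversionParity_eq_one cs
    (inversionParity_eq_one_of_length_mul_lt cs ht' (by rwa [hπt']))
  obtain ⟨j, hj, hjt⟩ := List.getElem_of_mem hmem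
  refine ⟨j, by simpa using hj, ?_⟩
  rw [← hπt', ← hjt, ← cs.wordProd_mul_getD_rightInvSeq, List.getD_eq_getElem]

theorem step_wordProd_eraseIdx {ω : List B} (hω : cs.IsReduced ω) {j : ℕ}
    (hj : j < ω.length) : Step cs (π (ω.eraseIdx j)) (π ω) := by
  have hlis : (lis ω).getD j 1 ∈ lis ω := by
    rw [List.getD_eq_getElem _ _ (by simpa using hj)]
    exact List.getElem_mem _
  have ht := cs.isReflection_of_mem_leftInvSeq ω hlis
  refine ⟨_, ht, ?_, ?_⟩
  · rw [← cs.getD_leftInvSeq_mul_wordProd, ← mul_assoc, ht.mul_self, one_mul]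
  · have := cs.length_wordProd_le (ω.eraseIdx j)
    have := List.length_eraseIdx_add_one hj
    rw [hω.eq]
    omega

theorem step_simple_mul {w : W} {i : B} (h : ℓ w < ℓ (s i * w)) : Step cs w (s i * w) :=
  ⟨s i, cs.isReflection_simple i, rfl, h⟩

theorem step_of_simple_mul_lt {w : W} {i : B} (h : ℓ (s i * w) < ℓ w) : Step cs (s i * w) w :=
  ⟨s i, cs.isReflection_simple i, (cs.simple_mul_simple_cancel_left i).symm, h⟩

variable {cs}

theorem Step.length_lt {u v : W} (h : Step cs u v) : ℓ u < ℓ v := by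
  obtain ⟨_, _, _, hlt⟩ := h
  exact hlt

theorem Step.simple_mul {u v : W} (h : Step cs u v) {i : B} (hlt : ℓ (s i * u) < ℓ (s i * v)) :
    Step cs (s i * u) (s i * v) := by
  obtain ⟨t, ht, rfl, -⟩ := h
  exact ⟨s i * t * (s i)⁻¹, ht.conj _, by group, hlt⟩

theorem Step.inv {u v : W} (h : Step cs u v) : Step cs u⁻¹ v⁻¹ := by
  obtain ⟨t, ht, rfl, hlt⟩ := h
  refine ⟨u⁻¹ * t * u⁻¹⁻¹, ht.conj _, ?_, by rwa [cs.length_inv, cs.length_inv]⟩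
  rw [mul_inv_rev, ht.inv]
  group

theorem BruhatLE.length_le {u v : W} (h : BruhatLE cs u v) : ℓ u ≤ ℓ v := by
  induction h with
  | refl => exact le_rfl
  | tail _ hstep ih => exact ih.trans hstep.length_lt.le

theorem BruhatLE.eq_of_length_le {u v : W} (h : BruhatLE cs u v) (hlen : ℓ v ≤ ℓ u) :
    u = v := by
  rcases Relation.ReflTransGen.cases_tail h with rfl | ⟨x, hux, hxv⟩
  · rfl
  · have := BruhatLE.length_le hux
    have := hxv.length_lt
    omega

theorem BruhatLE.inv {u v : W} (h : BruhatLE cs u v) : BruhatLE cs u⁻¹ v⁻¹ :=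
  Relation.ReflTransGen.lift (fun x : W => x⁻¹) (fun _ _ => Step.inv) _ _ h

variable (cs) in
noncomputable def leftMin (i : B) (w : W) : W := if ℓ (s i * w) < ℓ w then s i * w else w

variable (cs) in
noncomputable def leftMax (i : B) (w : W) : W := if ℓ (s i * w) < ℓ w then w else s i * w

theorem Step.le_simple_mul_and_simple_mul_le {x w : W} (h : Step cs x w) {i : B}
    (hx : ℓ x < ℓ (s i * x)) (hw : ℓ (s i * w) < ℓ w) :
    BruhatLE cs x (s i * w) ∧ BruhatLE cs (s i * x) w := by
  obtain ⟨t, ht, hwt, hlt⟩ := h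
  have htw : t * w = x := by rw [hwt, ← mul_assoc, ht.mul_self, one_mul]
  obtain ⟨α, hα, hπα⟩ := cs.exists_isReduced (s i * w)
  have hπ : π (i :: α) = w := by rw [wordProd_cons, ← hπα, cs.simple_mul_simple_cancel_left]
  obtain ⟨j, hj, hx_eq⟩ := exists_reflection_mul_eq_wordProd_eraseIdx cs (i :: α) ht
    (by rwa [hπ, htw])
  rw [hπ, htw] at hx_eq
  have hdown : BruhatLE cs (s i * w) w := .single (step_of_simple_mul_lt cs hw)
  cases j with
  | zero =>
    rw [List.eraseIdx_cons_zero, ← hπα] at hx_eq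
    subst hx_eq
    exact ⟨.refl, by rw [cs.simple_mul_simple_cancel_left]; exact .refl⟩
  | succ j =>
    rw [List.eraseIdx_cons_succ, wordProd_cons] at hx_eq
    have hz : BruhatLE cs (π (α.eraseIdx j)) (s i * w) :=
      hπα ▸ .single (step_wordProd_eraseIdx cs hα (by simpa using hj))
    have hsx : s i * x = π (α.eraseIdx j) := by rw [hx_eq, cs.simple_mul_simple_cancel_left]
    exact ⟨(Relation.ReflTransGen.single (step_simple_mul cs hx)).trans (hsx ▸ hz),
      hsx ▸ hz.trans hdown⟩

theorem Step.mono_leftMin_leftMax {x w : W} (h : Step cs x w) (i : B) :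
    BruhatLE cs (leftMin cs i x) (leftMin cs i w) ∧
      BruhatLE cs (leftMax cs i x) (leftMax cs i w) := by
  have hxw := h.length_lt
  rcases cs.length_simple_mul x i with hx | hx <;> rcases cs.length_simple_mul w i with hw | hw
  · simp only [leftMin, leftMax, if_neg (show ¬ ℓ (s i * x) < ℓ x by omega),
      if_neg (show ¬ ℓ (s i * w) < ℓ w by omega)]
    exact ⟨.single h, .single (h.simple_mul (by omega))⟩
  · simp only [leftMin, leftMax, if_neg (show ¬ ℓ (s i * x) < ℓ x by omega),
      if_pos (show ℓ (s i * w) < ℓ w by omega)]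
    exact h.le_simple_mul_and_simple_mul_le (by omega) (by omega)
  · simp only [leftMin, leftMax, if_pos (show ℓ (s i * x) < ℓ x by omega),
      if_neg (show ¬ ℓ (s i * w) < ℓ w by omega)]
    exact ⟨.head (step_of_simple_mul_lt cs (by omega)) (.single h),
      .tail (.single h) (step_simple_mul cs (by omega))⟩
  · simp only [leftMin, leftMax, if_pos (show ℓ (s i * x) < ℓ x by omega),
      if_pos (show ℓ (s i * w) < ℓ w by omega)]
    exact ⟨.single (h.simple_mul (by omega)), .single h⟩

theorem BruhatLE.mono_leftMin {u w : W} (h : BruhatLE cs u w) (i : B) :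
    BruhatLE cs (leftMin cs i u) (leftMin cs i w) :=
  Relation.ReflTransGen.lift' (leftMin cs i) (fun _ _ hxy => (hxy.mono_leftMin_leftMax i).1) _ _ h

theorem BruhatLE.mono_leftMax {u w : W} (h : BruhatLE cs u w) (i : B) :
    BruhatLE cs (leftMax cs i u) (leftMax cs i w) :=
  Relation.ReflTransGen.lift' (leftMax cs i) (fun _ _ hxy => (hxy.mono_leftMin_leftMax i).2) _ _ h

section Lifting

variable {u w : W} {i : B}

theorem BruhatLE.le_simple_mul (h : BruhatLE cs u w) (hu : ℓ u < ℓ (s i * u))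
    (hw : ℓ (s i * w) < ℓ w) : BruhatLE cs u (s i * w) := by
  simpa [leftMin, hw, hu.not_gt] using h.mono_leftMin i

theorem BruhatLE.simple_mul_le (h : BruhatLE cs u w) (hu : ℓ u < ℓ (s i * u))
    (hw : ℓ (s i * w) < ℓ w) : BruhatLE cs (s i * u) w := by
  simpa [leftMax, hw, hu.not_gt] using h.mono_leftMax i

theorem BruhatLE.simple_mul_le_simple_mul_of_descent (h : BruhatLE cs u w)
    (hu : ℓ (s i * u) < ℓ u) (hw : ℓ (s i * w) < ℓ w) :
    BruhatLE cs (s i * u) (s i * w) := by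
  simpa [leftMin, hw, hu] using h.mono_leftMin i

theorem BruhatLE.simple_mul_le_simple_mul_of_ascent (h : BruhatLE cs u w)
    (hu : ℓ u < ℓ (s i * u)) (hw : ℓ w < ℓ (s i * w)) :
    BruhatLE cs (s i * u) (s i * w) := by
  simpa [leftMax, hw.not_gt, hu.not_gt] using h.mono_leftMax i

theorem BruhatLE.le_mul_simple (h : BruhatLE cs u w) (hu : ℓ u < ℓ (u * s i))
    (hw : ℓ (w * s i) < ℓ w) : BruhatLE cs u (w * s i) := by
  have hinv : ∀ v : W, s i * v⁻¹ = (v * s i)⁻¹ := by simp [cs.inv_simple]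
  simpa [hinv] using (h.inv.le_simple_mul (by rwa [hinv, cs.length_inv, cs.length_inv])
    (by rwa [hinv, cs.length_inv, cs.length_inv])).inv

end Lifting

variable (cs) in
def rightQuotient (I : Set B) : Set W := {w | ∀ i ∈ I, ℓ w < ℓ (w * s i)}

variable (cs) in
def QuotientCover (I : Set B) (u v : W) : Prop :=
  BruhatLE cs u v ∧ ℓ v = ℓ u + 1 ∧ v ∈ rightQuotient cs I

section Quotient

variable {I : Set B} {i : B}

theorem simple_mul_mem_rightQuotient {w : W} (hw : w ∈ rightQuotient cs I)
    (hi : ℓ (s i * w) < ℓ w) : s i * w ∈ rightQuotient cs I := by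
  intro j hj
  have := hw j hj
  have := cs.length_simple_mul (w * s j) i
  rw [mul_assoc]
  omega

theorem QuotientCover.simple_mul_eq {y y' : W} (h : QuotientCover cs I y y')
    (hy : ℓ y < ℓ (s i * y)) (hy' : ℓ (s i * y') < ℓ y') : s i * y = y' := by
  have := h.2.1
  have := cs.length_simple_mul y i
  exact (h.1.simple_mul_le hy hy').eq_of_length_le (by omega)

theorem QuotientCover.simple_mul_mem {y y' : W} (h : QuotientCover cs I y y')
    (hy : ℓ y < ℓ (s i * y)) (hsy : s i * y ∈ rightQuotient cs I)
    (hy' : ℓ y' < ℓ (s i * y')) :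
    s i * y' ∈ rightQuotient cs I := by
  obtain ⟨hle, hlen, hy'I⟩ := h
  intro j hj
  by_contra hnot
  have := cs.length_mul_simple (s i * y') j
  have hdesc : ℓ (s i * y' * s j) < ℓ (s i * y') := by omega
  have hsy_le := (hle.simple_mul_le_simple_mul_of_ascent hy hy').le_mul_simple (hsy j hj) hdesc
  have := cs.length_simple_mul y i
  have := cs.length_simple_mul y' i
  have heq : s i * y = s i * y' * s j := hsy_le.eq_of_length_le (by omega)
  rw [mul_assoc] at heq
  have := hy'I j hj
  rw [← mul_left_cancel heq] at this
  omega

theorem reflTransGen_quotientCover_simple_mul {y z : W}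
    (h : Relation.ReflTransGen (QuotientCover cs I) y z) (hy : ℓ y < ℓ (s i * y))
    (hsy : s i * y ∈ rightQuotient cs I) (hz : ℓ z < ℓ (s i * z))
    (hsz : s i * z ∈ rightQuotient cs I) :
    Relation.ReflTransGen (QuotientCover cs I) (s i * y) (s i * z) := by
  induction h using Relation.ReflTransGen.head_induction_on with
  | refl => exact .refl
  | @head y y' hcov hrest ih =>
    have := hcov.2.1
    have := cs.length_simple_mul y i
    rcases cs.length_simple_mul y' i with hy' | hy'
    · have hsy' := hcov.simple_mul_mem hy hsy (by omega)
      exact .head ⟨hcov.1.simple_mul_le_simple_mul_of_ascent hy (by omega), by omega, hsy'⟩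
        (ih (by omega) hsy')
    · have := cs.length_simple_mul z i
      rw [hcov.simple_mul_eq hy (by omega)]
      exact hrest.tail ⟨.single (step_simple_mul cs hz), by omega, hsz⟩

theorem reflTransGen_quotientCover_of_le {u w : W} (hu : u ∈ rightQuotient cs I)
    (hw : w ∈ rightQuotient cs I) (h : BruhatLE cs u w) :
    Relation.ReflTransGen (QuotientCover cs I) u w := by
  induction hn : ℓ w using Nat.strong_induction_on generalizing u w with
  | _ n ih =>
  by_cases hw1 : w = 1
  · subst hw1
    rw [h.eq_of_length_le (by simp)]
  obtain ⟨i, hi⟩ : ∃ i, ℓ (s i * w) < ℓ w := cs.exists_leftDescent_of_ne_one hw1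
  have := cs.length_simple_mul w i
  have hsw := simple_mul_mem_rightQuotient hw hi
  have hcover : QuotientCover cs I (s i * w) w :=
    ⟨.single (step_of_simple_mul_lt cs hi), by omega, hw⟩
  by_cases hle : BruhatLE cs u (s i * w)
  · exact (ih _ (hn ▸ hi) hu hsw hle rfl).tail hcover
  have := cs.length_simple_mul u i
  have hu' : ℓ (s i * u) < ℓ u := by
    by_contra hnot
    exact hle (h.le_simple_mul (by omega) hi)
  have hlow := ih _ (hn ▸ hi) (simple_mul_mem_rightQuotient hu hu') hsw
    (h.simple_mul_le_simple_mul_of_descent hu' hi) rfl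
  have hlift := reflTransGen_quotientCover_simple_mul hlow
    (by rwa [cs.simple_mul_simple_cancel_left]) (by rwa [cs.simple_mul_simple_cancel_left])
    (by rwa [cs.simple_mul_simple_cancel_left]) (by rwa [cs.simple_mul_simple_cancel_left])
  rwa [cs.simple_mul_simple_cancel_left, cs.simple_mul_simple_cancel_left] at hlift

end Quotient

theorem quotient_chain_property_general (cs : CoxeterSystem M W) (I : Set B) (u w : W)
    (hu : ∀ i ∈ I, cs.length u < cs.length (u * cs.simple i))
    (hw : ∀ i ∈ I, cs.length w < cs.length (w * cs.simple i))
    (huw : BruhatLE cs u w) :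
    ∃ (k : ℕ) (c : ℕ → W), c 0 = u ∧ c k = w ∧
      (∀ i ≤ k, ∀ j ∈ I, cs.length (c i) < cs.length (c i * cs.simple j)) ∧
      (∀ i < k, BruhatLE cs (c i) (c (i + 1)) ∧
        cs.length (c (i + 1)) = cs.length (c i) + 1) := by
  obtain ⟨k, c, hc0, hck, hcover⟩ := (reflTransGen_quotientCover_of_le hu hw huw).exists_chain
  refine ⟨k, c, hc0, hck, fun r hr => ?_, fun r hr => ⟨(hcover r hr).1, (hcover r hr).2.1⟩⟩
  cases r with
  | zero => exact hc0 ▸ hu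
  | succ r => exact (hcover r hr).2.2

/-- Chain property of the quotient `W^I`: if `u < w` in `W^I`, there is a chain
`u = v₀ < v₁ < ⋯ < v_k = w` inside `W^I` with `ℓ(v_{i+1}) = ℓ(v_i) + 1`. -/
theorem quotient_chain_property (cs : CoxeterSystem M W) (I : Set B) (u w : W)
    (hu : ∀ i ∈ I, cs.length u < cs.length (u * cs.simple i))
    (hw : ∀ i ∈ I, cs.length w < cs.length (w * cs.simple i))
    (huw : BruhatLE cs u w) (hne : u ≠ w) :
    ∃ (k : ℕ) (c : ℕ → W), c 0 = u ∧ c k = w ∧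
      (∀ i ≤ k, ∀ j ∈ I, cs.length (c i) < cs.length (c i * cs.simple j)) ∧
      (∀ i < k, BruhatLE cs (c i) (c (i + 1)) ∧
        cs.length (c (i + 1)) = cs.length (c i) + 1) :=
  quotient_chain_property_general cs I u w hu hw huw

end CoxeterBruhat
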